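/- Let K be a field of characteristic zero in which the group of roots of unity is finite of order m. If two matrices g₁, g₂ ∈ GL_n(K̄) with all eigenvalues in K satisfy that g₁^k and g₂^k are conjugate for some positive integer k, then g₁^m and g₂^m have the same characteristic polynomial. -/

import Mathlib

open Matrix Polynomial

section Aux

variable {N : ℕ} {F : Type*} [Field F]

private lemma aux_eval_charpoly (M : Matrix (Fin N) (Fin N) F) (t : F) :
    M.charpoly.eval t = (Matrix.scalar (Fin N) t - M).det := by
  rw [Matrix.charpoly, _root_.eval_det, matPolyEquiv_charmatrix, eval_sub, eval_X, eval_C]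

private lemma aux_charpoly_conj [Infinite F] (P : (Matrix (Fin N) (Fin N) F)ˣ)
    (A : Matrix (Fin N) (Fin N) F) :
    ((P : Matrix (Fin N) (Fin N) F) * A * ((P⁻¹ : (Matrix (Fin N) (Fin N) F)ˣ) :
      Matrix (Fin N) (Fin N) F)).charpoly = A.charpoly := by
  set Pm : Matrix (Fin N) (Fin N) F := (P : Matrix (Fin N) (Fin N) F)
  set Qm : Matrix (Fin N) (Fin N) F := ((P⁻¹ : (Matrix (Fin N) (Fin N) F)ˣ) :
      Matrix (Fin N) (Fin N) F)
  have hPQ : Pm * Qm = 1 := Units.mul_inv P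
  apply Polynomial.funext
  intro t
  rw [aux_eval_charpoly, aux_eval_charpoly]
  have h1 : Matrix.scalar (Fin N) t - Pm * A * Qm
      = Pm * (Matrix.scalar (Fin N) t - A) * Qm := by
    rw [Matrix.mul_sub, Matrix.sub_mul]
    congr 1
    rw [← (Matrix.scalar_commute t (Commute.all t) Pm).eq, mul_assoc, hPQ, mul_one]
  rw [h1, Matrix.det_mul, Matrix.det_mul]
  have h2 : Pm.det * Qm.det = 1 := by rw [← Matrix.det_mul, hPQ, Matrix.det_one]
  calc Pm.det * (Matrix.scalar (Fin N) t - A).det * Qm.det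
      = (Matrix.scalar (Fin N) t - A).det * (Pm.det * Qm.det) := by ring
    _ = (Matrix.scalar (Fin N) t - A).det := by rw [h2, mul_one]

private lemma aux_prod_comm {α β M : Type*} [CommMonoid M] (R : Multiset α) (s : Finset β)
    (f : β → α → M) :
    ∏ i ∈ s, (R.map (f i)).prod = (R.map (fun r => ∏ i ∈ s, f i r)).prod := by
  induction R using Multiset.induction with
  | empty => simp
  | cons a R ih => simp [Multiset.map_cons, Multiset.prod_cons, Finset.prod_mul_distrib, ih]

private lemma aux_charpoly_pow [IsAlgClosed F] [CharZero F] (M : Matrix (Fin N) (Fin N) F)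
    {m : ℕ} (hm : 0 < m) :
    (M ^ m).charpoly
      = ((M.charpoly.roots.map (fun r => r ^ m)).map (fun r => X - C r)).prod := by
  have hsplits : (M.charpoly).Splits := IsAlgClosed.splits _
  have hR : M.charpoly = ((M.charpoly).roots.map (fun r => X - C r)).prod :=
    hsplits.eq_prod_roots_of_monic (Matrix.charpoly_monic M)
  have hcard : (M.charpoly).roots.card = N := by
    rw [splits_iff_card_roots.mp hsplits, Matrix.charpoly_natDegree_eq_dim, Fintype.card_fin]
  have hNe : NeZero (m : F) := ⟨Nat.cast_ne_zero.mpr hm.ne'⟩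
  obtain ⟨ζ, hζ⟩ := HasEnoughRootsOfUnity.exists_primitiveRoot F m
  apply Polynomial.funext
  intro t
  obtain ⟨s, hs⟩ := IsAlgClosed.exists_pow_nat_eq t hm
  have hfact : (X ^ m - C t : F[X]) = ∏ i ∈ Finset.range m, (X - C (ζ ^ i * s)) :=
    X_pow_sub_C_eq_prod hζ hm hs
  set R := M.charpoly.roots with hRdef
  let d : F[X] →* F :=
    Matrix.detMonoidHom.comp ((Polynomial.aeval M).toRingHom.toMonoidHom)
  have hd : ∀ p : F[X], d p = ((Polynomial.aeval M) p).det := fun p => rfl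
  have hdfact := congrArg d hfact
  rw [map_prod] at hdfact
  have heval : ∀ u : F, M.charpoly.eval u = (R.map (fun r => u - r)).prod := by
    intro u
    conv_lhs => rw [hR]
    rw [eval_multiset_prod, Multiset.map_map]
    congr 1
    apply Multiset.map_congr rfl
    intro r _
    simp
  have hlin : ∀ u : F, d (X - C u) = (-1) ^ N * (R.map (fun r => u - r)).prod := by
    intro u
    rw [hd, map_sub, aeval_X, aeval_C, ← heval]
    have : (algebraMap F (Matrix (Fin N) (Fin N) F)) u = Matrix.scalar (Fin N) u := rfl
    rw [this, show M - Matrix.scalar (Fin N) u = -(Matrix.scalar (Fin N) u - M) from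
      (neg_sub _ _).symm, Matrix.det_neg, aux_eval_charpoly, Fintype.card_fin]
  have hdl : d (X ^ m - C t) = ((M ^ m).charpoly.eval t) * (-1) ^ N := by
    rw [hd, map_sub, map_pow, aeval_X, aeval_C]
    have : (algebraMap F (Matrix (Fin N) (Fin N) F)) t = Matrix.scalar (Fin N) t := rfl
    rw [this, show M ^ m - Matrix.scalar (Fin N) t = -(Matrix.scalar (Fin N) t - M ^ m) from
      (neg_sub _ _).symm, Matrix.det_neg, aux_eval_charpoly, Fintype.card_fin, mul_comm]
  have hinner : ∀ r : F, ∏ i ∈ Finset.range m, (ζ ^ i * s - r) = (-1) ^ m * (r ^ m - t) := by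
    intro r
    have := congrArg (Polynomial.eval r) hfact
    rw [eval_sub, eval_pow, eval_X, eval_C, eval_prod] at this
    simp only [eval_sub, eval_X, eval_C] at this
    calc ∏ i ∈ Finset.range m, (ζ ^ i * s - r)
        = ∏ i ∈ Finset.range m, (-1) * (r - (ζ ^ i * s)) := by
          apply Finset.prod_congr rfl; intro i _; ring
      _ = (-1) ^ m * ∏ i ∈ Finset.range m, (r - (ζ ^ i * s)) := by
          rw [Finset.prod_mul_distrib, Finset.prod_const, Finset.card_range]
      _ = (-1) ^ m * (r ^ m - t) := by rw [← this]
  have hrhs : ∏ i ∈ Finset.range m, d (X - C (ζ ^ i * s))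
      = (-1) ^ (N * m) * ((-1) ^ (m * N) * (R.map (fun r => r ^ m - t)).prod) := by
    calc ∏ i ∈ Finset.range m, d (X - C (ζ ^ i * s))
        = ∏ i ∈ Finset.range m, ((-1) ^ N * (R.map (fun r => ζ ^ i * s - r)).prod) := by
          apply Finset.prod_congr rfl; intro i _; rw [hlin]
      _ = (-1) ^ (N * m) * ∏ i ∈ Finset.range m, (R.map (fun r => ζ ^ i * s - r)).prod := by
          rw [Finset.prod_mul_distrib, Finset.prod_const, Finset.card_range, ← pow_mul]
      _ = (-1) ^ (N * m) * (R.map (fun r => ∏ i ∈ Finset.range m, (ζ ^ i * s - r))).prod := by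
          rw [aux_prod_comm]
      _ = (-1) ^ (N * m) * (R.map (fun r => (-1) ^ m * (r ^ m - t))).prod := by
          congr 1
          apply congrArg
          apply Multiset.map_congr rfl
          intro r _; exact hinner r
      _ = (-1) ^ (N * m) * ((-1) ^ (m * N) * (R.map (fun r => r ^ m - t)).prod) := by
          congr 1
          rw [show (fun r : F => (-1 : F) ^ m * (r ^ m - t))
              = fun r : F => ((fun _ => ((-1 : F) ^ m)) r) * ((fun x : F => x ^ m - t) r) from rfl,
            Multiset.prod_map_mul, Multiset.map_const', Multiset.prod_replicate, hcard, ← pow_mul]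
  have key : (M ^ m).charpoly.eval t * (-1) ^ N
      = (-1) ^ (N * m) * ((-1) ^ (m * N) * (R.map (fun r => r ^ m - t)).prod) := by
    rw [← hdl, hdfact, hrhs]
  have hfin : (M ^ m).charpoly.eval t = (-1) ^ N * (R.map (fun r => r ^ m - t)).prod := by
    have h4 : ((-1 : F) ^ N) * ((-1) ^ N) = 1 := by
      rw [← pow_add]; exact Even.neg_one_pow ⟨N, rfl⟩
    calc (M ^ m).charpoly.eval t = (M ^ m).charpoly.eval t * ((-1) ^ N * (-1) ^ N) := by
          rw [h4, mul_one]
      _ = ((M ^ m).charpoly.eval t * (-1) ^ N) * (-1) ^ N := by ring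
      _ = (-1) ^ (N * m) * ((-1) ^ (m * N) * (R.map (fun r => r ^ m - t)).prod) * (-1) ^ N := by
          rw [key]
      _ = ((-1) ^ (N * m) * (-1) ^ (m * N)) * (-1) ^ N * (R.map (fun r => r ^ m - t)).prod := by
          ring
      _ = (-1) ^ N * (R.map (fun r => r ^ m - t)).prod := by
          rw [← pow_add, show N * m + m * N = 2 * (N * m) by ring, pow_mul, neg_one_sq, one_pow,
            one_mul]
  rw [hfin, eval_multiset_prod, Multiset.map_map, Multiset.map_map]
  calc (-1 : F) ^ N * (R.map (fun r => r ^ m - t)).prod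
      = (R.map (fun r => (-1) * (r ^ m - t))).prod := by
        rw [show (fun r : F => (-1 : F) * (r ^ m - t))
            = fun r : F => ((fun _ => (-1 : F)) r) * ((fun x : F => x ^ m - t) r) from rfl,
          Multiset.prod_map_mul, Multiset.map_const', Multiset.prod_replicate, hcard]
    _ = (R.map (fun r => t - r ^ m)).prod := by
        apply congrArg
        apply Multiset.map_congr rfl
        intro r _; ring
    _ = (R.map (eval t ∘ (fun r => X - C r) ∘ fun r => r ^ m)).prod := by
        apply congrArg
        apply Multiset.map_congr rfl
        intro r _; simp

private lemma aux_multiset_pow {F : Type*} [CommRing F] {P : F → Prop} {k m : ℕ}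
    (hpow : ∀ a b : F, P a → P b → b ^ k = a ^ k → b ^ m = a ^ m) :
    ∀ S T : Multiset F, (∀ x ∈ S, P x) → (∀ x ∈ T, P x) →
      S.map (fun x => x ^ k) = T.map (fun x => x ^ k) →
      S.map (fun x => x ^ m) = T.map (fun x => x ^ m) := by
  intro S
  induction S using Multiset.induction with
  | empty =>
    intro T _ _ h
    rw [Multiset.map_zero, eq_comm, Multiset.map_eq_zero] at h
    simp [h]
  | cons a S ih =>
    intro T hS hT h
    classical
    have ha : P a := hS a (Multiset.mem_cons_self a S)
    have hak : a ^ k ∈ T.map (fun x => x ^ k) := by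
      rw [← h, Multiset.map_cons]
      exact Multiset.mem_cons_self _ _
    obtain ⟨b, hbT, hbk⟩ := Multiset.mem_map.mp hak
    have hb : P b := hT b hbT
    have hbm : b ^ m = a ^ m := hpow a b ha hb hbk
    have hTb : T = b ::ₘ T.erase b := (Multiset.cons_erase hbT).symm
    rw [hTb, Multiset.map_cons, Multiset.map_cons, hbk] at h
    have h' : S.map (fun x => x ^ k) = (T.erase b).map (fun x => x ^ k) :=
      (Multiset.cons_inj_right _).mp h
    have := ih (T.erase b) (fun x hx => hS x (Multiset.mem_cons_of_mem hx))
      (fun x hx => hT x (Multiset.mem_of_mem_erase hx)) h'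
    rw [hTb, Multiset.map_cons, Multiset.map_cons, hbm, this]

end Aux

theorem stmt_7 {n : ℕ} {K : Type*} [Field K] [CharZero K] (m : ℕ)
    (hroots : Nat.card {x : Kˣ // IsOfFinOrder x} = m)
    (g₁ g₂ : GL (Fin n) (AlgebraicClosure K)) (k : ℕ) (hk : 0 < k)
    (heig₁ : ∀ x ∈ (Matrix.charpoly (g₁ : Matrix (Fin n) (Fin n) (AlgebraicClosure K))).roots,
      x ∈ Set.range (algebraMap K (AlgebraicClosure K)))
    (heig₂ : ∀ x ∈ (Matrix.charpoly (g₂ : Matrix (Fin n) (Fin n) (AlgebraicClosure K))).roots,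
      x ∈ Set.range (algebraMap K (AlgebraicClosure K)))
    (hconj : ∃ M : GL (Fin n) (AlgebraicClosure K), M * g₁ ^ k * M⁻¹ = g₂ ^ k) :
    Matrix.charpoly ((g₁ : Matrix (Fin n) (Fin n) (AlgebraicClosure K)) ^ m)
      = Matrix.charpoly ((g₂ : Matrix (Fin n) (Fin n) (AlgebraicClosure K)) ^ m) := by
  rcases Nat.eq_zero_or_pos m with hm | hm
  · rw [hm, pow_zero, pow_zero]
  set F := AlgebraicClosure K
  set A₁ : Matrix (Fin n) (Fin n) F := (g₁ : Matrix (Fin n) (Fin n) F) with hA₁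
  set A₂ : Matrix (Fin n) (Fin n) F := (g₂ : Matrix (Fin n) (Fin n) F) with hA₂
  -- the torsion group fact
  have htor : ∀ u : Kˣ, IsOfFinOrder u → u ^ m = 1 := by
    intro u hu
    have hx : u ∈ CommGroup.torsion Kˣ := (CommGroup.mem_torsion u).mpr hu
    have hcard : Nat.card (CommGroup.torsion Kˣ) = m := by
      rw [← hroots]
      exact Nat.card_congr (Equiv.subtypeEquivRight (fun y => CommGroup.mem_torsion y))
    have hpc := pow_card_eq_one' (x := (⟨u, hx⟩ : CommGroup.torsion Kˣ))
    rw [hcard] at hpc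
    have := congrArg (Subtype.val) hpc
    simpa using this
  -- the key property of eigenvalues
  set P : F → Prop := fun x => x ≠ 0 ∧ x ∈ Set.range (algebraMap K F) with hPdef
  have hpow : ∀ a b : F, P a → P b → b ^ k = a ^ k → b ^ m = a ^ m := by
    rintro a b ⟨ha0, a', rfl⟩ ⟨hb0, b', rfl⟩ hk'
    have inj : Function.Injective (algebraMap K F) := (algebraMap K F).injective
    have ha' : a' ≠ 0 := fun h => ha0 (by rw [h, map_zero])
    have hb' : b' ≠ 0 := fun h => hb0 (by rw [h, map_zero])
    have hk'' : b' ^ k = a' ^ k := by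
      apply inj
      rw [map_pow, map_pow]
      exact hk'
    set u : Kˣ := Units.mk0 b' hb' * (Units.mk0 a' ha')⁻¹ with hu
    have hval : (u : K) = b' * a'⁻¹ := rfl
    have huk : u ^ k = 1 := by
      apply Units.ext
      rw [Units.val_pow_eq_pow_val, hval, Units.val_one, mul_pow, hk'', inv_pow,
        mul_inv_cancel₀ (pow_ne_zero _ ha')]
    have hfo : IsOfFinOrder u := isOfFinOrder_iff_pow_eq_one.mpr ⟨k, hk, huk⟩
    have hum := htor u hfo
    have hm' : b' ^ m * (a' ^ m)⁻¹ = 1 := by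
      have := congrArg Units.val hum
      rw [Units.val_pow_eq_pow_val, hval, Units.val_one, mul_pow, inv_pow] at this
      exact this
    have hba : b' ^ m = a' ^ m := by
      field_simp at hm'
      exact hm'
    rw [← map_pow, ← map_pow, hba]
  -- nonvanishing of eigenvalues
  have hne : ∀ (g : GL (Fin n) F), ∀ x ∈ (Matrix.charpoly (g : Matrix (Fin n) (Fin n) F)).roots,
      x ≠ 0 := by
    intro g x hx hx0
    have hdet : (g : Matrix (Fin n) (Fin n) F).det ≠ 0 :=
      ((Units.isUnit g).map Matrix.detMonoidHom).ne_zero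
    rw [Matrix.det_eq_prod_roots_charpoly] at hdet
    exact hdet (Multiset.prod_eq_zero (hx0 ▸ hx))
  -- charpoly of the k-th powers agree
  obtain ⟨Mc, hMc⟩ := hconj
  have hcpk : (A₁ ^ k).charpoly = (A₂ ^ k).charpoly := by
    have h2 : A₂ ^ k = (Mc : Matrix (Fin n) (Fin n) F) * (A₁ ^ k) *
        ((Mc⁻¹ : GL (Fin n) F) : Matrix (Fin n) (Fin n) F) := by
      rw [hA₁, hA₂, ← Units.val_pow_eq_pow_val, ← Units.val_pow_eq_pow_val, ← hMc]
      rfl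
    rw [h2, aux_charpoly_conj]
  -- compare root multisets
  have h1 := aux_charpoly_pow A₁ hk
  have h2 := aux_charpoly_pow A₂ hk
  have hrooteq : A₁.charpoly.roots.map (fun x => x ^ k)
      = A₂.charpoly.roots.map (fun x => x ^ k) := by
    have := congrArg Polynomial.roots (h1.symm.trans (hcpk.trans h2))
    rwa [roots_multiset_prod_X_sub_C, roots_multiset_prod_X_sub_C] at this
  have hmeq : A₁.charpoly.roots.map (fun x => x ^ m)
      = A₂.charpoly.roots.map (fun x => x ^ m) :=
    aux_multiset_pow hpow _ _ (fun x hx => ⟨hne g₁ x hx, heig₁ x hx⟩)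
      (fun x hx => ⟨hne g₂ x hx, heig₂ x hx⟩) hrooteq
  rw [aux_charpoly_pow A₁ hm, aux_charpoly_pow A₂ hm, hmeq]
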